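/- arXiv:1106.2338 — 7 statements merged into one kernel-verified Lean document; each statement's English description precedes it below -/
import Mathlib

section
/- Let $X,Y$ be normed linear spaces with $Y$ finite dimensional (a Banach space). Let $S:X\rightrightarrows Y$ be locally closed at $(\bar x,\bar y)\in\mathrm{gph}(S)$ and let $H:X\rightrightarrows Y$ be positively homogeneous and compact-valued. If $S$ is pseudo strictly $H$-differentiable at $(\bar x,\bar y)$, then for all $\delta>0$ there are neighborhoods $U$ of $\bar x$ and $V$ of $\bar y$ such that for all $(x,y)\in\mathrm{gph}(S)\cap[U\times V]$ and all $p\in X\setminus\{0\}$, $DS(x\mid y)(p)\cap[-(H+\delta)(-p)]\neq\emptyset$, where $DS(x\mid y)$ is the graphical derivative defined via the tangent cone to $\mathrm{gph}(S)$ at $(x,y)$. -/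
open Metric Set Pointwise

/-- Graph of a set-valued map. -/
def gph {X Y : Type*} (S : X → Set Y) : Set (X × Y) := {p | p.2 ∈ S p.1}

/-- Positive homogeneity of a set-valued map. -/
def PosHomog {X Y : Type*} [NormedAddCommGroup X] [NormedSpace ℝ X]
    [NormedAddCommGroup Y] [NormedSpace ℝ Y] (H : X → Set Y) : Prop :=
  (∀ c : ℝ, 0 < c → ∀ y ∈ H 0, c • y ∈ H 0) ∧
  (∀ c : ℝ, 0 < c → ∀ w, H (c • w) = c • H w)

/-- Enlargement `(H + δ)(w) = H w + δ‖w‖𝔹`. -/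
def enl {X Y : Type*} [NormedAddCommGroup X] [NormedSpace ℝ X]
    [NormedAddCommGroup Y] [NormedSpace ℝ Y] (H : X → Set Y) (δ : ℝ) (w : X) : Set Y :=
  {y | ∃ h ∈ H w, ‖y - h‖ ≤ δ * ‖w‖}

/-- Pseudo strict `H`-differentiability of `S` at `(xb, yb)`. -/
def PseudoStrictDiff {X Y : Type*} [NormedAddCommGroup X] [NormedSpace ℝ X]
    [NormedAddCommGroup Y] [NormedSpace ℝ Y]
    (S : X → Set Y) (H : X → Set Y) (xb : X) (yb : Y) : Prop :=
  ∀ δ : ℝ, 0 < δ → ∃ U ∈ nhds xb, ∃ V ∈ nhds yb,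
    ∀ x ∈ U, ∀ x' ∈ U, ∀ y ∈ S x ∩ V, ∃ y' ∈ S x', y - y' ∈ enl H δ (x - x')

/-- Local closedness of `gph S` at `(xb, yb)`. -/
def LocallyClosedAt {X Y : Type*} [NormedAddCommGroup X] [NormedSpace ℝ X]
    [NormedAddCommGroup Y] [NormedSpace ℝ Y] (S : X → Set Y) (xb : X) (yb : Y) : Prop :=
  ∃ ε : ℝ, 0 < ε ∧ IsClosed (gph S ∩ Metric.closedBall (xb, yb) ε)

/-- The graphical (contingent) derivative `DS(x∣y)` of `S` at `(x, y)`. -/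
def graphDeriv {X Y : Type*} [NormedAddCommGroup X] [NormedSpace ℝ X]
    [NormedAddCommGroup Y] [NormedSpace ℝ Y]
    (S : X → Set Y) (x : X) (y : Y) (p : X) : Set Y :=
  {q | (p, q) ∈ tangentConeAt ℝ (gph S) (x, y)}

/-! Moving from `x` in a direction `p` by a step `t > 0`, pseudo strict `H`-differentiability
provides `y_t ∈ S (x + t p)` whose difference quotient `(y_t - y) / t` lies in `-(H + δ)(-p)`
(positive homogeneity of `H` removes the factor `t`). That set is compact, so along a sequence
`t → 0` the quotients have a limit, and it lies in `DS(x ∣ y)(p)`. -/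

open Filter Topology

section Enlargement

variable {X Y : Type*} [NormedAddCommGroup X] [NormedSpace ℝ X]
  [NormedAddCommGroup Y] [NormedSpace ℝ Y]

theorem enl_eq_add_closedBall (H : X → Set Y) (δ : ℝ) (w : X) :
    enl H δ w = H w + closedBall 0 (δ * ‖w‖) := by
  ext y
  constructor
  · rintro ⟨h, hh, hy⟩
    exact ⟨h, hh, y - h, mem_closedBall_zero_iff.2 hy, add_sub_cancel h y⟩
  · rintro ⟨h, hh, z, hz, rfl⟩
    exact ⟨h, hh, by simpa using mem_closedBall_zero_iff.1 hz⟩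

theorem IsCompact.enl [ProperSpace Y] {H : X → Set Y} {w : X} (hH : IsCompact (H w)) (δ : ℝ) :
    IsCompact (enl H δ w) := by
  rw [enl_eq_add_closedBall]
  exact hH.add (isCompact_closedBall 0 _)

theorem enl_smul {H : X → Set Y} (hH : ∀ c : ℝ, 0 < c → ∀ w, H (c • w) = c • H w)
    (δ : ℝ) {c : ℝ} (hc : 0 < c) (w : X) : enl H δ (c • w) = c • enl H δ w := by
  rw [enl_eq_add_closedBall, enl_eq_add_closedBall, hH c hc, smul_add, smul_closedBall' hc.ne',
    smul_zero, norm_smul, Real.norm_of_nonneg hc.le, mul_left_comm]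

end Enlargement

theorem exists_mem_inter_tangentConeAt_of_isCompact {𝕜 E : Type*} [NontriviallyNormedField 𝕜]
    [NormedAddCommGroup E] [NormedSpace 𝕜 E] {s K : Set E} {x : E} (hK : IsCompact K)
    (h : ∃ᶠ t in 𝓝[≠] (0 : 𝕜), ∃ v ∈ K, x + t • v ∈ s) :
    (K ∩ tangentConeAt 𝕜 s x).Nonempty := by
  obtain ⟨t, ht, hts⟩ := exists_seq_forall_of_frequently h
  choose v hvK hvs using hts
  obtain ⟨a, haK, φ, hφ, hva⟩ := hK.tendsto_subseq hvK
  have ht' : Tendsto (t ∘ φ) atTop (𝓝[≠] 0) := ht.comp hφ.tendsto_atTop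
  refine ⟨a, haK, mem_tangentConeAt_of_seq atTop (fun n ↦ (t (φ n))⁻¹)
    (fun n ↦ t (φ n) • v (φ n)) ?_ (.of_forall fun n ↦ hvs (φ n)) ?_⟩
  · simpa using (tendsto_nhds_of_tendsto_nhdsWithin ht').smul hva
  · refine hva.congr' ?_
    filter_upwards [tendsto_nhdsWithin_iff.1 ht' |>.2] with n hn
    exact (inv_smul_smul₀ hn _).symm

theorem stmt4_general {X Y : Type*} [NormedAddCommGroup X] [NormedSpace ℝ X]
    [NormedAddCommGroup Y] [NormedSpace ℝ Y] [FiniteDimensional ℝ Y]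
    (S : X → Set Y) (H : X → Set Y) (xb : X) (yb : Y)
    (hH : PosHomog H) (hcpt : ∀ w, IsCompact (H w))
    (hdiff : PseudoStrictDiff S H xb yb) :
    ∀ δ : ℝ, 0 < δ → ∃ U ∈ nhds xb, ∃ V ∈ nhds yb,
      ∀ x ∈ U, ∀ y ∈ V, y ∈ S x → ∀ p : X, p ≠ 0 →
        (graphDeriv S x y p ∩ (-enl H δ (-p))).Nonempty := by
  intro δ hδ
  obtain ⟨U, hU, V, hV, hSV⟩ := hdiff δ hδ
  refine ⟨interior U, interior_mem_nhds.2 hU, V, hV, fun x hx y hy hyS p _ ↦ ?_⟩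
  have hxU : ∀ᶠ t in 𝓝[>] (0 : ℝ), x + t • p ∈ U := by
    have : Tendsto (fun t : ℝ ↦ x + t • p) (𝓝 0) (𝓝 x) :=
      (continuous_const.add (continuous_id.smul continuous_const)).tendsto' 0 x (by simp)
    exact nhdsWithin_le_nhds (this.eventually (mem_interior_iff_mem_nhds.1 hx))
  have hquot : ∀ᶠ t in 𝓝[>] (0 : ℝ),
      ∃ v ∈ {p} ×ˢ (-enl H δ (-p)), (x, y) + t • v ∈ gph S := by
    filter_upwards [hxU, self_mem_nhdsWithin] with t htU (ht : 0 < t)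
    obtain ⟨y', hy'S, hy'⟩ := hSV x (interior_subset hx) _ htU y ⟨hyS, hy⟩
    rw [show x - (x + t • p) = t • -p by module, enl_smul hH.2 δ ht,
      mem_smul_set_iff_inv_smul_mem₀ ht.ne'] at hy'
    refine ⟨(p, t⁻¹ • (y' - y)), ⟨rfl, by simpa [Set.mem_neg, smul_sub] using hy'⟩, ?_⟩
    simpa [gph, smul_smul, ht.ne'] using hy'S
  obtain ⟨⟨p', q⟩, ⟨rfl, hq⟩, hpq⟩ := exists_mem_inter_tangentConeAt_of_isCompact
    (isCompact_singleton.prod ((hcpt (-p)).enl δ).neg)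
    (hquot.frequently.filter_mono (nhdsWithin_mono _ fun t ht ↦ ne_of_gt ht))
  exact ⟨q, hpq, hq⟩

theorem stmt4 {X Y : Type*} [NormedAddCommGroup X] [NormedSpace ℝ X]
    [NormedAddCommGroup Y] [NormedSpace ℝ Y] [FiniteDimensional ℝ Y]
    (S : X → Set Y) (H : X → Set Y) (xb : X) (yb : Y)
    (hgph : yb ∈ S xb) (hloc : LocallyClosedAt S xb yb)
    (hH : PosHomog H) (hcpt : ∀ w, IsCompact (H w))
    (hdiff : PseudoStrictDiff S H xb yb) :
    ∀ δ : ℝ, 0 < δ → ∃ U ∈ nhds xb, ∃ V ∈ nhds yb,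
      ∀ x ∈ U, ∀ y ∈ V, y ∈ S x → ∀ p : X, p ≠ 0 →
        (graphDeriv S x y p ∩ (-enl H δ (-p))).Nonempty :=
  stmt4_general S H xb yb hH hcpt hdiff
end

section
/- Let $S_1:\mathbb{R}\rightrightarrows\mathbb{R}$ be defined by $S_1(x)=(-\infty,-|x|]\cup[|x|,\infty)$, and let $H:\mathbb{R}\rightrightarrows\mathbb{R}$ be a prefan. Then $S_1$ is pseudo strictly $H$-differentiable at $(0,0)$ if and only if $[-|p|,|p|]\subset H(p)$ for all $p\in\mathbb{R}$. -/
/-!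
Every `S₁ x` is at Hausdorff distance at most `|x - x'|` from `S₁ x'`, which gives the easy
direction with `U = V = univ`. Conversely, testing pseudo strict differentiability along the ray
through `-p` with `y = |x|` shows that `H p` contains points below `-c|p|` for every `c < 1`, and,
by the symmetry `S₁ x = -S₁ x`, points above `c|p|`; convexity and closedness of `H p` then give
`[-|p|, |p|] ⊆ H p`. Boundedness of the prefan is what keeps `y'` on the correct branch of `S₁`.
-/

open Metric Set Pointwise

/-- A prefan: nonempty convex compact values, positively homogeneous, finite outer norm. -/
def Prefan {X Y : Type*} [NormedAddCommGroup X] [NormedSpace ℝ X]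
    [NormedAddCommGroup Y] [NormedSpace ℝ Y] (H : X → Set Y) : Prop :=
  (∀ p, (H p).Nonempty ∧ Convex ℝ (H p) ∧ IsCompact (H p)) ∧
  PosHomog H ∧
  ∃ M : ℝ, ∀ w : X, ‖w‖ ≤ 1 → ∀ z ∈ H w, ‖z‖ ≤ M

namespace Prefan

variable {X Y : Type*} [NormedAddCommGroup X] [NormedSpace ℝ X]
  [NormedAddCommGroup Y] [NormedSpace ℝ Y] {H : X → Set Y}

/-- Positive homogeneity makes `H 0` a cone, and a bounded cone is `{0}`. -/
theorem eq_zero_of_mem_zero (hH : Prefan H) {z : Y} (hz : z ∈ H 0) : z = 0 := by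
  obtain ⟨-, ⟨hcone, -⟩, M, hM⟩ := hH
  have hzM : ‖z‖ ≤ M := hM 0 (by simp) z hz
  by_contra hz0
  have hpos : 0 < ‖z‖ := norm_pos_iff.mpr hz0
  have hc : 0 < (M + 1) / ‖z‖ := div_pos (by linarith [norm_nonneg z]) hpos
  have h := hM 0 (by simp) _ (hcone _ hc z hz)
  rw [norm_smul, Real.norm_of_nonneg hc.le, div_mul_cancel₀ _ hpos.ne'] at h
  linarith

theorem zero_mem (hH : Prefan H) : (0 : Y) ∈ H 0 := by
  obtain ⟨z, hz⟩ := (hH.1 0).1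
  rwa [← hH.eq_zero_of_mem_zero hz]

theorem exists_norm_le (hH : Prefan H) :
    ∃ K, 0 ≤ K ∧ ∀ p, ∀ z ∈ H p, ‖z‖ ≤ K * ‖p‖ := by
  obtain ⟨M, hM⟩ := hH.2.2
  refine ⟨max M 0, le_max_right _ _, fun p z hz => ?_⟩
  rcases eq_or_ne p 0 with rfl | hp
  · simp [hH.eq_zero_of_mem_zero hz]
  have hnp : 0 < ‖p‖ := norm_pos_iff.mpr hp
  have hHp : H p = ‖p‖ • H (‖p‖⁻¹ • p) := by
    rw [← hH.2.1.2 _ hnp, smul_inv_smul₀ hnp.ne']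
  rw [hHp] at hz
  obtain ⟨w, hw, rfl⟩ := hz
  have hw1 : ‖w‖ ≤ max M 0 :=
    (hM _ (by rw [norm_smul, norm_inv, norm_norm, inv_mul_cancel₀ hnp.ne']) w hw).trans
      (le_max_left _ _)
  rw [norm_smul, norm_norm, mul_comm]
  exact mul_le_mul_of_nonneg_right hw1 hnp.le

end Prefan

theorem PseudoStrictDiff.neg {X Y : Type*} [NormedAddCommGroup X] [NormedSpace ℝ X]
    [NormedAddCommGroup Y] [NormedSpace ℝ Y] {S H : X → Set Y} {xb : X} {yb : Y}
    (h : PseudoStrictDiff S H xb yb) :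
    PseudoStrictDiff (fun x => -S x) (fun w => -H w) xb (-yb) := by
  intro δ hδ
  obtain ⟨U, hU, V, hV, hmain⟩ := h δ hδ
  have hV' : -V ∈ nhds (-yb) := by rwa [nhds_neg, Filter.mem_neg, neg_preimage, neg_neg]
  refine ⟨U, hU, -V, hV', fun x hx x' hx' y hy => ?_⟩
  obtain ⟨y', hy', e, he, hnorm⟩ := hmain x hx x' hx' (-y) hy
  refine ⟨-y', neg_mem_neg.mpr hy', -e, neg_mem_neg.mpr he, ?_⟩
  rwa [← norm_neg, show -(y - -y' - -e) = -y - y' - e by abel]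

def S₁ (x : ℝ) : Set ℝ := {y | |x| ≤ |y|}

@[simp]
theorem mem_S₁ {x y : ℝ} : y ∈ S₁ x ↔ |x| ≤ |y| := Iff.rfl

theorem S₁_eq : S₁ = fun x => Iic (-|x|) ∪ Ici |x| := by
  funext x
  ext y
  simp only [mem_S₁, mem_union, mem_Iic, mem_Ici, le_abs']

theorem neg_S₁ : (fun x => -S₁ x) = S₁ := by
  funext x
  ext y
  simp [S₁]

theorem exists_mem_S₁_abs_sub_le {x y : ℝ} (hy : y ∈ S₁ x) (x' : ℝ) :
    ∃ y' ∈ S₁ x', |y - y'| ≤ |x - x'| := by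
  have hx := abs_sub_abs_le_abs_sub x' x
  rw [abs_sub_comm x'] at hx
  rcases le_total 0 y with hy0 | hy0
  · refine ⟨max y |x'|, mem_S₁.mpr ((le_max_right _ _).trans (le_abs_self _)), ?_⟩
    rw [mem_S₁, abs_of_nonneg hy0] at hy
    rw [abs_sub_comm, abs_of_nonneg (sub_nonneg.mpr (le_max_left _ _))]
    exact sub_le_iff_le_add.mpr (max_le (by linarith [abs_nonneg (x - x')]) (by linarith))
  · refine ⟨min y (-|x'|), mem_S₁.mpr ((le_neg.mpr (min_le_right _ _)).trans (neg_le_abs _)), ?_⟩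
    rw [mem_S₁, abs_of_nonpos hy0] at hy
    rw [abs_of_nonneg (sub_nonneg.mpr (min_le_left _ _))]
    exact sub_le_comm.mp (le_min (by linarith [abs_nonneg (x - x')]) (by linarith))

theorem pseudoStrictDiff_S₁_of_Icc_subset {H : ℝ → Set ℝ} (hH : ∀ p, Icc (-|p|) |p| ⊆ H p)
    (xb yb : ℝ) : PseudoStrictDiff S₁ H xb yb := by
  intro δ hδ
  refine ⟨univ, Filter.univ_mem, univ, Filter.univ_mem, fun x _ x' _ y hy => ?_⟩
  obtain ⟨y', hy', hle⟩ := exists_mem_S₁_abs_sub_le hy.1 x'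
  exact ⟨y', hy', y - y', hH _ (abs_le.mp hle), by simp; positivity⟩

theorem IsClosed.mem_of_forall_smul_mem {E : Type*} [AddCommGroup E] [Module ℝ E]
    [TopologicalSpace E] [ContinuousSMul ℝ E] {C : Set E} (hC : IsClosed C) {x : E}
    (h : ∀ c ∈ Ioo (0 : ℝ) 1, c • x ∈ C) : x ∈ C :=
  hC.mem_of_tendsto (b := nhdsWithin 1 (Iio 1))
    (((continuous_id.smul continuous_const).tendsto' 1 x (one_smul ℝ x)).mono_left
      nhdsWithin_le_nhds)
    (Filter.mem_of_superset (Ioo_mem_nhdsLT zero_lt_one) h)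

/-- Test the condition at `x = -sLp`, `x' = -s(L+1)p`, `y = sL|p|`, so that `x - x' = sp`.
A point `y' ∈ S₁ x'` on the negative branch would give `|y - y'| ≥ s(2L+1)|p|`, more than
`H (s * p)` enlarged by `(1 - c)s|p|` can reach; on the positive branch `y - y' ≤ -s|p|`,
which forces the element of `H p` below `-c|p|`. -/
theorem exists_mem_le_of_pseudoStrictDiff_S₁ {H : ℝ → Set ℝ} (hd : PseudoStrictDiff S₁ H 0 0)
    {p K c : ℝ} (hp : p ≠ 0) (hc : c < 1) (hK0 : 0 ≤ K) (hK : ∀ z ∈ H p, |z| ≤ K * |p|)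
    (hhom : ∀ s, 0 < s → H (s * p) = s • H p) : ∃ a ∈ H p, a ≤ -(c * |p|) := by
  obtain ⟨U, hU, V, hV, hmain⟩ := hd (1 - c) (sub_pos.mpr hc)
  have hsmall : ∀ v : ℝ, ∀ W ∈ nhds (0 : ℝ), ∀ᶠ s in nhdsWithin 0 (Ioi 0), s * v ∈ W :=
    fun v W hW => (((continuous_mul_const v).tendsto' 0 0 (zero_mul v)).eventually hW).filter_mono
      nhdsWithin_le_nhds
  set L := K + (1 - c)
  have hL : 0 ≤ L := by linarith
  obtain ⟨s, hs, hxU, hx'U, hyV⟩ : ∃ s : ℝ, 0 < s ∧ s * -(L * p) ∈ U ∧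
      s * -((L + 1) * p) ∈ U ∧ s * (L * |p|) ∈ V :=
    (eventually_mem_nhdsWithin.and
      ((hsmall _ U hU).and ((hsmall _ U hU).and (hsmall _ V hV)))).exists
  have hP : 0 < |p| := abs_pos.mpr hp
  have hy : s * (L * |p|) ∈ S₁ (s * -(L * p)) := by
    simp [abs_mul, abs_of_pos hs, abs_of_nonneg hL]
  obtain ⟨y', hy', e, he, hnorm⟩ := hmain _ hxU _ hx'U _ ⟨hy, hyV⟩
  rw [show s * -(L * p) - s * -((L + 1) * p) = s * p by ring] at he hnorm
  rw [hhom s hs] at he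
  obtain ⟨a, ha, rfl⟩ := mem_smul_set.mp he
  refine ⟨a, ha, ?_⟩
  have haK := abs_le.mp (hK a ha)
  rw [mem_S₁, abs_mul, abs_neg, abs_mul, abs_of_pos hs, abs_of_pos (by positivity : 0 < L + 1)]
    at hy'
  rw [Real.norm_eq_abs, Real.norm_eq_abs, abs_mul, abs_of_pos hs, smul_eq_mul, abs_le] at hnorm
  rcases le_abs'.mp hy' with hy'neg | hy'pos
  · nlinarith
  · nlinarith

theorem Icc_subset_of_pseudoStrictDiff_S₁ {H : ℝ → Set ℝ} (hH : Prefan H)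
    (hd : PseudoStrictDiff S₁ H 0 0) (p : ℝ) : Icc (-|p|) |p| ⊆ H p := by
  rcases eq_or_ne p 0 with rfl | hp
  · simpa using hH.zero_mem
  obtain ⟨K, hK0, hK⟩ := hH.exists_norm_le
  have hKp : ∀ z ∈ H p, |z| ≤ K * |p| := hK p
  have hhom : ∀ s, 0 < s → H (s * p) = s • H p := fun s hs => hH.2.1.2 s hs p
  -- `S₁` is symmetric, so the lower-endpoint argument applied to `-H` gives the upper endpoint.
  have hdneg : PseudoStrictDiff S₁ (fun w => -H w) 0 0 := by
    simpa only [neg_S₁, neg_zero] using hd.neg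
  intro q hq
  refine (hH.1 p).2.2.isClosed.mem_of_forall_smul_mem fun c hc => ?_
  obtain ⟨a, ha, hac⟩ := exists_mem_le_of_pseudoStrictDiff_S₁ hd hp hc.2 hK0 hKp hhom
  obtain ⟨b, hb, hbc⟩ := exists_mem_le_of_pseudoStrictDiff_S₁ hdneg hp hc.2 hK0
    (fun z hz => by simpa using hKp _ hz) (fun s hs => by rw [hhom s hs, smul_set_neg])
  rw [smul_eq_mul]
  refine (hH.1 p).2.1.ordConnected.out ha (mem_neg.mp hb) ⟨?_, ?_⟩
  · nlinarith [mul_le_mul_of_nonneg_left hq.1 hc.1.le]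
  · nlinarith [mul_le_mul_of_nonneg_left hq.2 hc.1.le]

theorem stmt8 (H : ℝ → Set ℝ) (hH : Prefan H) :
    PseudoStrictDiff (fun x : ℝ => Iic (-|x|) ∪ Ici |x|) H 0 0 ↔
    ∀ p : ℝ, Icc (-|p|) |p| ⊆ H p := by
  rw [← S₁_eq]
  exact ⟨fun hd => Icc_subset_of_pseudoStrictDiff_S₁ hH hd,
    fun hsub => pseudoStrictDiff_S₁_of_Icc_subset hsub 0 0⟩
end

section
/- Let $S_2:\mathbb{R}\rightrightarrows\mathbb{R}$ be defined by $S_2(x)=\{x,-x\}$, and let $H:\mathbb{R}\rightrightarrows\mathbb{R}$ be a prefan. Then $S_2$ is pseudo strictly $H$-differentiable at $(0,0)$ if and only if $[-1,1]\subset H(1)$ and $[-1,1]\subset H(-1)$. -/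
open Metric Set Pointwise

/-!
Both sides say that `w` and `-w` lie in `H w` for every `w`. Pseudo strict differentiability
of `S₂` at the origin gives, along the rays `t ↦ (t w, ±t w)` of its graph and with `x' = 0`,
points of `t • H w` within `δ t |w|` of `±t w`; as `H w` is closed this puts `±w` in `H w`.
Conversely, if `±(x - x') ∈ H (x - x')`, every `y = ±x` is matched exactly by `y' = ±x'`.
By positive homogeneity the condition only has to be checked at `w = ±1`, where convexity
turns `±1 ∈ H (±1)` into `[-1, 1] ⊆ H (±1)`.
-/

open Filter Topology

section

variable {X Y : Type*} [NormedAddCommGroup X] [NormedSpace ℝ X]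
  [NormedAddCommGroup Y] [NormedSpace ℝ Y]

theorem Prefan.zero_mem_zero {H : X → Set Y} (hH : Prefan H) : (0 : Y) ∈ H 0 := by
  obtain ⟨hvals, ⟨hpos0, -⟩, M, hM⟩ := hH
  obtain ⟨y, hy⟩ := (hvals 0).1
  have hbound : ∀ c : ℝ, 0 < c → c * ‖y‖ ≤ M := fun c hc => by
    simpa [norm_smul, abs_of_pos hc] using hM 0 (by simp) _ (hpos0 c hc y hy)
  have hy0 : y = 0 := by
    by_contra hne
    have hpos : 0 < ‖y‖ := norm_pos_iff.2 hne
    have := hbound ((|M| + 1) / ‖y‖) (by positivity)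
    rw [div_mul_cancel₀ _ hpos.ne'] at this
    linarith [le_abs_self M]
  exact hy0 ▸ hy

theorem tendsto_smul_nhdsGT_zero (u : X) : Tendsto (fun t : ℝ => t • u) (𝓝[>] 0) (𝓝 0) :=
  ((continuous_id.smul continuous_const).tendsto' 0 0 (zero_smul ℝ u)).mono_left
    nhdsWithin_le_nhds

theorem mem_enl_of_mem {H : X → Set Y} {δ : ℝ} (hδ : 0 ≤ δ) {w : X} {z : Y} (hz : z ∈ H w) :
    z ∈ enl H δ w :=
  ⟨z, hz, by rw [sub_self, norm_zero]; positivity⟩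

theorem PseudoStrictDiff.mem_of_forall_smul_mem {S H : X → Set Y}
    (hS : PseudoStrictDiff S H 0 0) (hH : PosHomog H) (hS0 : S 0 ⊆ {0}) {w : X} {v : Y}
    (hclosed : IsClosed (H w)) (hray : ∀ t : ℝ, 0 < t → t • v ∈ S (t • w)) : v ∈ H w := by
  rw [← hclosed.closure_eq, Metric.mem_closure_iff]
  intro ε hε
  set δ := ε / (‖w‖ + 1)
  have hδ : 0 < δ := by positivity
  obtain ⟨U, hU, V, hV, hUV⟩ := hS δ hδ
  obtain ⟨t, ⟨htU, htV⟩, ht⟩ :=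
    (((tendsto_smul_nhdsGT_zero w).eventually hU).and
      ((tendsto_smul_nhdsGT_zero v).eventually hV)).and self_mem_nhdsWithin |>.exists
  obtain ⟨y', hy', hy'enl⟩ := hUV _ htU 0 (mem_of_mem_nhds hU) _ ⟨hray t ht, htV⟩
  obtain rfl : y' = 0 := hS0 hy'
  rw [sub_zero, sub_zero] at hy'enl
  obtain ⟨_, hh, hle⟩ := hy'enl
  rw [hH.2 t ht] at hh
  obtain ⟨a, ha, rfl⟩ := hh
  refine ⟨a, ha, ?_⟩
  have hscaled : t * ‖v - a‖ ≤ t * (δ * ‖w‖) := by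
    simpa only [← smul_sub, norm_smul, Real.norm_of_nonneg ht.le, mul_left_comm] using hle
  calc dist v a = ‖v - a‖ := dist_eq_norm v a
    _ ≤ δ * ‖w‖ := le_of_mul_le_mul_left hscaled ht
    _ = ε * (‖w‖ / (‖w‖ + 1)) := by ring
    _ < ε := mul_lt_of_lt_one_right hε ((div_lt_one (by positivity)).2 (lt_add_one _))

theorem pseudoStrictDiff_self_neg_iff {E : Type*} [NormedAddCommGroup E] [NormedSpace ℝ E]
    {H : E → Set E} (hH : PosHomog H) (hclosed : ∀ w, IsClosed (H w)) :
    PseudoStrictDiff (fun x : E => {x, -x}) H 0 0 ↔ ∀ w, w ∈ H w ∧ -w ∈ H w := by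
  constructor
  · intro hS w
    have hS0 : ({0, -0} : Set E) ⊆ {0} := by simp
    constructor <;> refine hS.mem_of_forall_smul_mem hH hS0 (hclosed w) fun t _ => ?_ <;> simp
  · intro h δ hδ
    refine ⟨univ, univ_mem, univ, univ_mem, ?_⟩
    rintro x - x' - y ⟨rfl | rfl, -⟩
    · exact ⟨x', mem_insert _ _, mem_enl_of_mem hδ.le (h _).1⟩
    · refine ⟨-x', mem_insert_of_mem _ rfl, ?_⟩
      rw [neg_sub_neg, ← neg_sub x x']
      exact mem_enl_of_mem hδ.le (h _).2

end

theorem Prefan.forall_mem_and_neg_mem_iff {H : ℝ → Set ℝ} (hH : Prefan H) :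
    (∀ w, w ∈ H w ∧ -w ∈ H w) ↔ Icc (-1 : ℝ) 1 ⊆ H 1 ∧ Icc (-1 : ℝ) 1 ⊆ H (-1) := by
  have hscale := hH.2.1.2
  constructor
  · intro h
    have hIcc : ∀ σ, (-1 : ℝ) ∈ H σ → 1 ∈ H σ → Icc (-1 : ℝ) 1 ⊆ H σ := fun σ h₁ h₂ => by
      rw [← segment_eq_Icc (by norm_num)]
      exact (hH.1 σ).2.1.segment_subset h₁ h₂
    exact ⟨hIcc 1 (h 1).2 (h 1).1, hIcc (-1) (h (-1)).1 (by simpa using (h (-1)).2)⟩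
  · rintro ⟨h₁, h₂⟩ w
    have hone : (1 : ℝ) ∈ Icc (-1 : ℝ) 1 := ⟨by norm_num, le_rfl⟩
    have hneg_one : (-1 : ℝ) ∈ Icc (-1 : ℝ) 1 := ⟨le_rfl, by norm_num⟩
    rcases lt_trichotomy w 0 with hw | rfl | hw
    · have hHw : H w = (-w) • H (-1) := by simpa using hscale (-w) (neg_pos.2 hw) (-1)
      rw [hHw]
      exact ⟨⟨-1, h₂ hneg_one, by simp⟩, ⟨1, h₂ hone, by simp⟩⟩
    · simpa using hH.zero_mem_zero
    · have hHw : H w = w • H 1 := by simpa using hscale w hw 1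
      rw [hHw]
      exact ⟨⟨1, h₁ hone, by simp⟩, ⟨-1, h₁ hneg_one, by simp⟩⟩

theorem stmt9 (H : ℝ → Set ℝ) (hH : Prefan H) :
    PseudoStrictDiff (fun x : ℝ => {x, -x}) H 0 0 ↔
    (Icc (-1 : ℝ) 1 ⊆ H 1 ∧ Icc (-1 : ℝ) 1 ⊆ H (-1)) := by
  rw [pseudoStrictDiff_self_neg_iff hH.2.1 fun w => (hH.1 w).2.2.isClosed,
    hH.forall_mem_and_neg_mem_iff]
end

section
/- Define $S_3:\mathbb{R}\rightrightarrows\mathbb{R}$ by $S_3(x)=\{x,-x\}$ for $x\le 0$ and $S_3(x)=[-x,x]$ for $x\ge 0$, and define the (non-convex-valued) positively homogeneous map $H'(x)=\{x,-x\}$. Then $S_3$ is not pseudo strictly $H'$-differentiable at $(0,0)$, while the map $S_1(x)=(-\infty,-|x|]\cup[|x|,\infty)$ is pseudo strictly $H'$-differentiable at $(0,0)$. -/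
/-!
For `S₃`, take `x = t > 0` and `x' = -t`: then `0 ∈ S₃ t`, while every `y' ∈ S₃ (-t) = {±t}`
leaves `0 - y'` at distance at least `t` from `H'(2t) = {±2t}`, which beats `δ · 2t` once
`δ < 1/2`, however small the neighbourhoods are.

The map `S₁(x) = {y | |x| ≤ |y|}` satisfies the exact inclusion `S₁ x ⊆ S₁ x' + H'(x - x')`
for all `x, x'`: from `y ∈ S₁ x` move to `y ∓ (x - x')`, staying on the same side of `0`, with
the sign chosen by that of `x'`.
-/

open Metric Set Pointwise

/-- `S₃(x) = {x, -x}` for `x ≤ 0` and `[-x, x]` for `x ≥ 0`. -/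
noncomputable def S3 : ℝ → Set ℝ := fun x => if x ≤ 0 then {x, -x} else Icc (-x) x

/-- `H'(x) = {x, -x}`. -/
def H' : ℝ → Set ℝ := fun x => {x, -x}

open Filter Topology

section PseudoStrictDiff

variable {X Y : Type*} [NormedAddCommGroup X] [NormedSpace ℝ X]
    [NormedAddCommGroup Y] [NormedSpace ℝ Y]

lemma subset_enl (H : X → Set Y) {δ : ℝ} (hδ : 0 ≤ δ) (w : X) : H w ⊆ enl H δ w :=
  fun y hy => ⟨y, hy, by rw [sub_self, norm_zero]; positivity⟩

lemma pseudoStrictDiff_of_forall_exists_sub_mem {S H : X → Set Y}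
    (h : ∀ x x', ∀ y ∈ S x, ∃ y' ∈ S x', y - y' ∈ H (x - x')) (xb : X) (yb : Y) :
    PseudoStrictDiff S H xb yb := by
  intro δ hδ
  refine ⟨univ, univ_mem, univ, univ_mem, fun x _ x' _ y hy => ?_⟩
  obtain ⟨y', hy', hyy'⟩ := h x x' y hy.1
  exact ⟨y', hy', subset_enl H hδ.le _ hyy'⟩

end PseudoStrictDiff

lemma exists_pos_mem_and_neg_mem {U : Set ℝ} (hU : U ∈ 𝓝 0) : ∃ t, 0 < t ∧ t ∈ U ∧ -t ∈ U := by
  have h : ∀ᶠ t in 𝓝[>] (0 : ℝ), t ∈ U ∧ -t ∈ U :=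
    nhdsWithin_le_nhds (inter_mem hU (neg_mem_nhds_zero ℝ hU))
  exact (eventually_mem_nhdsWithin.and h).exists

lemma mem_enl_H'_iff {δ w z : ℝ} : z ∈ enl H' δ w ↔ |z - w| ≤ δ * |w| ∨ |z + w| ≤ δ * |w| := by
  simp only [enl, H', mem_insert_iff, mem_singleton_iff, Real.norm_eq_abs, exists_eq_or_imp,
    exists_eq_left, sub_neg_eq_add, mem_ofPred_eq]

lemma not_pseudoStrictDiff_S3 : ¬ PseudoStrictDiff S3 H' 0 0 := by
  intro h
  obtain ⟨U, hU, V, hV, hincl⟩ := h (1 / 4) (by norm_num)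
  obtain ⟨t, ht, htU, htU'⟩ := exists_pos_mem_and_neg_mem hU
  have h0 : (0 : ℝ) ∈ S3 t ∩ V := ⟨by simp [S3, not_le.mpr ht, ht.le], mem_of_mem_nhds hV⟩
  obtain ⟨y', hy', hmem⟩ := hincl t htU (-t) htU' 0 h0
  have hy'' : y' = -t ∨ y' = t := by simpa [S3, ht.le] using hy'
  rw [sub_neg_eq_add, mem_enl_H'_iff, abs_of_pos (by linarith : 0 < t + t)] at hmem
  rcases hy'' with rfl | rfl <;> rcases hmem with hle | hle <;>
    linarith [(abs_le.mp hle).1, (abs_le.mp hle).2]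

lemma Iic_neg_abs_union_Ici_abs (x : ℝ) : Iic (-|x|) ∪ Ici |x| = {y | |x| ≤ |y|} := by
  ext y
  simp only [mem_union, mem_Iic, mem_Ici, mem_ofPred_eq, le_abs']

lemma exists_abs_le_abs_sub_mem_H' {x y : ℝ} (hxy : |x| ≤ |y|) (x' : ℝ) :
    ∃ y', |x'| ≤ |y'| ∧ y - y' ∈ H' (x - x') := by
  obtain ⟨s, hs, hsx'⟩ : ∃ s : ℝ, (s = 1 ∨ s = -1) ∧ s * x' = |x'| := by
    rcases abs_cases x' with ⟨h, -⟩ | ⟨h, -⟩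
    · exact ⟨1, Or.inl rfl, by rw [h, one_mul]⟩
    · exact ⟨-1, Or.inr rfl, by rw [h, neg_one_mul]⟩
  have hsx : s * x ≤ |x| := by
    rcases hs with rfl | rfl
    · simpa using le_abs_self x
    · simpa using neg_le_abs x
  rcases abs_cases y with ⟨hy, -⟩ | ⟨hy, -⟩
  · refine ⟨y - s * (x - x'), ?_, ?_⟩
    · calc |x'| ≤ y - s * (x - x') := by linarith
        _ ≤ |y - s * (x - x')| := le_abs_self _
    · rcases hs with rfl | rfl <;> simp [H']
  · refine ⟨y + s * (x - x'), ?_, ?_⟩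
    · calc |x'| ≤ -(y + s * (x - x')) := by linarith
        _ ≤ |y + s * (x - x')| := neg_le_abs _
    · rcases hs with rfl | rfl <;> simp [H']

theorem stmt10 :
    ¬ PseudoStrictDiff S3 H' 0 0 ∧
    PseudoStrictDiff (fun x : ℝ => Iic (-|x|) ∪ Ici |x|) H' 0 0 := by
  refine ⟨not_pseudoStrictDiff_S3, pseudoStrictDiff_of_forall_exists_sub_mem ?_ 0 0⟩
  intro x x' y hy
  simp only [Iic_neg_abs_union_Ici_abs, mem_ofPred_eq] at hy ⊢
  exact exists_abs_le_abs_sub_mem_H' hy x'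
end

section
/- Let $S:\mathbb{R}^n\rightrightarrows\mathbb{R}^m$ be closed-valued and let $\{C_i\}_{i\in I}$ be a family of closed subsets of $\mathbb{R}^m$. Suppose that for every set $D$ which is a set-limit of $S(x_k)$ along some sequence $x_k\to\bar x$ (i.e., $D\in\limsup$ of $S$ in the sense of convergence of sets), there exists $i\in I$ with $C_i\subset D$. Then $S$ is $\{C_i\}_{i\in I}$-inner semicontinuous at $\bar x$: for all $\rho>0$ and $\epsilon>0$ there is a neighborhood $V\ni\bar x$ such that for each $x\in V$, some $i\in I$ satisfies $C_i\cap\rho\mathbb{B}\subset S(x)+\epsilon\mathbb{B}$. -/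
/-!
Argue by contradiction: there are `x k → x̄` such that for every `i` some point of
`C i ∩ ρ𝔹` stays at distance `> ε` from `S (x k)`. By Kuratowski's selection theorem (every
sequence of sets in a separable metric space has a Painlevé–Kuratowski convergent subsequence,
proved through the distance functions `infDist · (A k)`), a subsequence of `S (x k)` converges
to some `D`, and the hypothesis gives `C i ⊆ D`. The bad points of `C i ∩ ρ𝔹` have a Cauchy
subsequence; one of its terms lies in `D`, hence is approached by `S (x k)`, and so are the
later terms, which contradicts their distance `> ε` from `S (x k)`.
-/

open Metric Set Filter Topology Pointwise

/-- Painlevé–Kuratowski convergence of a sequence of sets `A k` to `D`. -/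
def PKConv {E : Type*} [NormedAddCommGroup E] (A : ℕ → Set E) (D : Set E) : Prop :=
  (∀ y ∈ D, ∃ yk : ℕ → E, (∀ k, yk k ∈ A k) ∧ Tendsto yk atTop (nhds y)) ∧
  (∀ (y : E) (φ : ℕ → ℕ), StrictMono φ → ∀ yk : ℕ → E, (∀ k, yk k ∈ A (φ k)) →
    Tendsto yk atTop (nhds y) → y ∈ D)

section DistanceFunctions

variable {X : Type*} [PseudoMetricSpace X]

theorem exists_tendsto_of_denseRange_of_lipschitzWith {f : ℕ → X → ℝ}
    (hf : ∀ k, LipschitzWith 1 (f k)) {q : ℕ → X} (hq : DenseRange q)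
    (hconv : ∀ j, ∃ l, Tendsto (fun k => f k (q j)) atTop (𝓝 l)) (y : X) :
    ∃ l, Tendsto (fun k => f k y) atTop (𝓝 l) := by
  refine cauchySeq_tendsto_of_complete (Metric.cauchySeq_iff.2 fun δ hδ => ?_)
  obtain ⟨j, hj⟩ := hq.exists_dist_lt y (show 0 < δ / 4 by positivity)
  obtain ⟨l, hl⟩ := hconv j
  obtain ⟨N, hN⟩ := Metric.cauchySeq_iff.1 hl.cauchySeq (δ / 4) (by positivity)
  have hclose : ∀ k, dist (f k y) (f k (q j)) < δ / 4 := fun k =>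
    ((hf k).dist_le_mul y (q j)).trans_lt (by simpa using hj)
  refine ⟨N, fun a ha b hb => ?_⟩
  calc dist (f a y) (f b y)
      ≤ dist (f a y) (f a (q j)) + dist (f a (q j)) (f b (q j)) + dist (f b (q j)) (f b y) :=
        dist_triangle4 _ _ _ _
    _ < δ := by
        have := hclose b
        rw [dist_comm] at this
        linarith [hclose a, hN a ha b hb]

theorem exists_strictMono_tendsto_infDist [TopologicalSpace.SeparableSpace X]
    {A : ℕ → Set X} (x₀ : X) {M : ℝ} (hM : ∀ k, infDist x₀ (A k) ≤ M) :
    ∃ ψ : ℕ → ℕ, StrictMono ψ ∧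
      ∀ y, ∃ l, Tendsto (fun k => infDist y (A (ψ k))) atTop (𝓝 l) := by
  have : Nonempty X := ⟨x₀⟩
  set q := TopologicalSpace.denseSeq X
  have hmem : ∀ k, (fun j => infDist (q j) (A k)) ∈
      univ.pi fun j => Icc (0 : ℝ) (M + dist (q j) x₀) := fun k j _ =>
    ⟨infDist_nonneg, infDist_le_infDist_add_dist.trans (by linarith [hM k])⟩
  obtain ⟨L, -, ψ, hψ, hL⟩ := (isCompact_univ_pi fun j => isCompact_Icc).tendsto_subseq hmem
  refine ⟨ψ, hψ, exists_tendsto_of_denseRange_of_lipschitzWith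
    (fun k => lipschitz_infDist_pt (A (ψ k))) (TopologicalSpace.denseRange_denseSeq X)
    fun j => ⟨L j, tendsto_pi_nhds.1 hL j⟩⟩

theorem exists_seq_mem_tendsto_of_tendsto_infDist {A : ℕ → Set X} {y : X}
    (hne : ∀ k, (A k).Nonempty) (hy : Tendsto (fun k => infDist y (A k)) atTop (𝓝 0)) :
    ∃ yk : ℕ → X, (∀ k, yk k ∈ A k) ∧ Tendsto yk atTop (𝓝 y) := by
  have hsel : ∀ k : ℕ, ∃ z ∈ A k, dist y z < infDist y (A k) + 1 / (k + 1) := fun k =>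
    (infDist_lt_iff (hne k)).1 (lt_add_of_pos_right _ (by positivity))
  choose yk hykA hyk using hsel
  refine ⟨yk, hykA, tendsto_iff_dist_tendsto_zero.2 ?_⟩
  refine squeeze_zero (fun k => dist_nonneg) (fun k => (dist_comm (yk k) y).trans_le (hyk k).le) ?_
  simpa using hy.add tendsto_one_div_add_atTop_nhds_zero_nat

end DistanceFunctions

section Selection

variable {E : Type*} [NormedAddCommGroup E]

theorem pkConv_setOf_tendsto_infDist {A : ℕ → Set E} (hne : ∀ k, (A k).Nonempty)
    (hconv : ∀ y, ∃ l, Tendsto (fun k => infDist y (A k)) atTop (𝓝 l)) :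
    PKConv A {y | Tendsto (fun k => infDist y (A k)) atTop (𝓝 0)} := by
  refine ⟨fun y hy => exists_seq_mem_tendsto_of_tendsto_infDist hne hy, ?_⟩
  intro y φ hφ yk hyk hlim
  obtain ⟨l, hl⟩ := hconv y
  have hsub : Tendsto (fun k => infDist y (A (φ k))) atTop (𝓝 0) :=
    squeeze_zero (fun k => infDist_nonneg)
      (fun k => (infDist_le_dist_of_mem (hyk k)).trans_eq (dist_comm _ _))
      (tendsto_iff_dist_tendsto_zero.1 hlim)
  have hl0 : l = 0 := tendsto_nhds_unique (hl.comp hφ.tendsto_atTop) hsub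
  simpa [hl0] using hl

theorem pkConv_empty_of_eventually_inter_ball_eq_empty {A : ℕ → Set E}
    (hA : ∀ x, ∀ᶠ k in atTop, A k ∩ ball x 1 = ∅) : PKConv A ∅ := by
  refine ⟨fun y hy => hy.elim, fun y φ hφ yk hyk hlim => ?_⟩
  obtain ⟨k, hkA, hkB⟩ :=
    ((hφ.tendsto_atTop.eventually (hA y)).and (hlim (ball_mem_nhds y one_pos))).exists
  exact (eq_empty_iff_forall_notMem.1 hkA) (yk k) ⟨hyk k, hkB⟩

theorem exists_strictMono_pkConv [TopologicalSpace.SeparableSpace E] (A : ℕ → Set E) :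
    ∃ ψ : ℕ → ℕ, StrictMono ψ ∧ ∃ D, PKConv (fun k => A (ψ k)) D := by
  by_cases h : ∃ x, ∃ᶠ k in atTop, (A k ∩ ball x 1).Nonempty
  · obtain ⟨x, hx⟩ := h
    obtain ⟨φ, hφ, hφx⟩ := extraction_of_frequently_atTop hx
    have hbdd : ∀ k, infDist x (A (φ k)) ≤ 1 := fun k => by
      obtain ⟨y, hyA, hyB⟩ := hφx k
      exact (infDist_le_dist_of_mem hyA).trans (by rw [dist_comm]; exact (mem_ball.1 hyB).le)
    obtain ⟨ψ, hψ, hconv⟩ := exists_strictMono_tendsto_infDist x hbdd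
    exact ⟨φ ∘ ψ, hφ.comp hψ, _,
      pkConv_setOf_tendsto_infDist (fun k => (hφx (ψ k)).mono inter_subset_left) hconv⟩
  · push Not at h
    exact ⟨id, strictMono_id, ∅, pkConv_empty_of_eventually_inter_ball_eq_empty h⟩

theorem PKConv.eventually_inter_ball_nonempty {A : ℕ → Set E} {D : Set E} (h : PKConv A D)
    {y : E} (hy : y ∈ D) {r : ℝ} (hr : 0 < r) : ∀ᶠ k in atTop, (A k ∩ ball y r).Nonempty := by
  obtain ⟨yk, hykA, hyk⟩ := h.1 y hy
  filter_upwards [hyk (ball_mem_nhds y hr)] with k hk using ⟨yk k, hykA k, hk⟩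

end Selection

theorem stmt14_general {n m : ℕ} {I : Type*}
    (S : (Fin n → ℝ) → Set (Fin m → ℝ)) (xb : Fin n → ℝ)
    (C : I → Set (Fin m → ℝ))
    (hyp : ∀ (D : Set (Fin m → ℝ)) (xk : ℕ → Fin n → ℝ),
      Tendsto xk atTop (nhds xb) → PKConv (fun k => S (xk k)) D → ∃ i, C i ⊆ D) :
    ∀ ρ : ℝ, 0 < ρ → ∀ ε : ℝ, 0 < ε → ∃ V ∈ nhds xb, ∀ x ∈ V, ∃ i,
      C i ∩ Metric.closedBall 0 ρ ⊆ S x + Metric.closedBall 0 ε := by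
  intro ρ _ ε hε
  rw [← eventually_iff_exists_mem]
  by_contra hbad
  obtain ⟨x, hx, hxbad⟩ := frequently_iff_seq_forall.1 (not_eventually.1 hbad)
  obtain ⟨ψ, hψ, D, hD⟩ := exists_strictMono_pkConv fun k => S (x k)
  obtain ⟨i, hCD⟩ := hyp D (x ∘ ψ) (hx.comp hψ.tendsto_atTop) hD
  have hz : ∀ k, ∃ z ∈ C i ∩ closedBall 0 ρ, z ∉ S (x (ψ k)) + closedBall 0 ε := fun k =>
    not_subset.1 fun hsub => hxbad (ψ k) ⟨i, hsub⟩
  choose z hzC hzS using hz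
  obtain ⟨w, -, φ, hφ, hzφ⟩ := (isCompact_closedBall 0 ρ).tendsto_subseq fun k => (hzC k).2
  obtain ⟨N, hN⟩ := Metric.cauchySeq_iff'.1 hzφ.cauchySeq (ε / 2) (half_pos hε)
  have hnear := hφ.tendsto_atTop.eventually
    (hD.eventually_inter_ball_nonempty (hCD (hzC (φ N)).1) (half_pos hε))
  obtain ⟨k, ⟨s, hsS, hs⟩, hkN⟩ := (hnear.and (eventually_ge_atTop N)).exists
  refine hzS (φ k) (add_subset_add_right (singleton_subset_iff.2 hsS) ?_)
  rw [singleton_add_closedBall_zero, mem_closedBall]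
  have hzk : dist (z (φ k)) (z (φ N)) < ε / 2 := hN k hkN
  linarith [dist_triangle (z (φ k)) (z (φ N)) s, mem_ball'.1 hs]

theorem stmt14 {n m : ℕ} {I : Type*}
    (S : (Fin n → ℝ) → Set (Fin m → ℝ)) (xb : Fin n → ℝ)
    (C : I → Set (Fin m → ℝ))
    (hSclosed : ∀ x, IsClosed (S x)) (hCclosed : ∀ i, IsClosed (C i))
    (hyp : ∀ (D : Set (Fin m → ℝ)) (xk : ℕ → Fin n → ℝ),
      Tendsto xk atTop (nhds xb) → PKConv (fun k => S (xk k)) D → ∃ i, C i ⊆ D) :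
    ∀ ρ : ℝ, 0 < ρ → ∀ ε : ℝ, 0 < ε → ∃ V ∈ nhds xb, ∀ x ∈ V, ∃ i,
      C i ∩ Metric.closedBall 0 ρ ⊆ S x + Metric.closedBall 0 ε :=
  stmt14_general S xb C hyp
end

section
/- Let $f_2:\mathbb{R}^2\to\mathbb{R}$ be $f_2(x)=\|x\|_2$, and let $H:\mathbb{R}^2\rightrightarrows\mathbb{R}$ be a prefan. Then $f_2$ (viewed as a set-valued map $x\mapsto\{f_2(x)\}$) is pseudo strictly $H$-differentiable at $(0,0)$ if and only if $[-\|p\|,\|p\|]\subset H(p)$ for all $p\in\mathbb{R}^2$. -/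
open Metric Set Pointwise

open Filter Topology

/-!
If `|t| ≤ ‖p‖`, then `p` splits as `x - x'` with `x, x'` on the line through `p` and
`‖x‖ - ‖x'‖ = t`. Scaling this splitting by a small `c > 0` puts it inside any neighbourhood of
`0`, so pseudo strict differentiability of the norm yields points of `H (c • p) = c • H p`
within `δ c ‖p‖` of `c t`; dividing by `c` and letting `δ → 0` gives `t ∈ H p` since `H p` is
closed. Conversely, `|‖x‖ - ‖x'‖| ≤ ‖x - x'‖` is exactly what `[-‖p‖, ‖p‖] ⊆ H p` provides.
-/

variable {E : Type*} [NormedAddCommGroup E] [NormedSpace ℝ E]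

lemma exists_sub_eq_and_norm_sub_norm_eq (p : E) {t : ℝ} (ht : |t| ≤ ‖p‖) :
    ∃ x x' : E, x - x' = p ∧ ‖x‖ - ‖x'‖ = t := by
  rcases eq_or_ne p 0 with rfl | hp
  · exact ⟨0, 0, sub_zero 0, by simpa [eq_comm] using ht⟩
  have hp' : 0 < ‖p‖ := norm_pos_iff.mpr hp
  obtain ⟨hlo, hhi⟩ := abs_le.mp ht
  refine ⟨((‖p‖ + t) / (2 * ‖p‖)) • p, (-((‖p‖ - t) / (2 * ‖p‖))) • p, ?_, ?_⟩
  · rw [← sub_smul]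
    convert one_smul ℝ p using 2
    field_simp
    ring
  · rw [norm_smul, norm_smul, norm_neg,
      Real.norm_of_nonneg (div_nonneg (by linarith) (by positivity)),
      Real.norm_of_nonneg (div_nonneg (by linarith) (by positivity))]
    field_simp
    ring

lemma mem_of_forall_exists_abs_sub_le {s : Set ℝ} (hs : IsClosed s) {t r : ℝ}
    (h : ∀ δ > 0, ∃ y ∈ s, |t - y| ≤ δ * r) : t ∈ s := by
  rw [← hs.closure_eq, Metric.mem_closure_iff]
  intro ε hε
  obtain ⟨y, hy, hty⟩ := h (ε / (|r| + 1)) (by positivity)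
  refine ⟨y, hy, lt_of_le_of_lt (hty.trans (mul_le_mul_of_nonneg_left (le_abs_self r)
    (by positivity))) ?_⟩
  rw [div_mul_eq_mul_div, div_lt_iff₀ (by positivity)]
  nlinarith [abs_nonneg r]

lemma pseudoStrictDiff_norm_of_Icc_subset {H : E → Set ℝ}
    (hH : ∀ p, Icc (-‖p‖) ‖p‖ ⊆ H p) :
    PseudoStrictDiff (fun x : E => {‖x‖}) H 0 0 := by
  intro δ hδ
  refine ⟨univ, univ_mem, univ, univ_mem, ?_⟩
  rintro x - x' - y ⟨rfl, -⟩
  refine ⟨‖x'‖, rfl, ‖x‖ - ‖x'‖, hH _ (abs_le.mp (abs_norm_sub_norm_le x x')), ?_⟩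
  simp only [sub_self, norm_zero]
  positivity

lemma exists_abs_sub_le_of_pseudoStrictDiff_norm {H : E → Set ℝ}
    (hhom : ∀ c : ℝ, 0 < c → ∀ w, H (c • w) = c • H w)
    (hdiff : PseudoStrictDiff (fun x : E => {‖x‖}) H 0 0) {δ : ℝ} (hδ : 0 < δ) (p : E)
    {t : ℝ} (ht : |t| ≤ ‖p‖) : ∃ h ∈ H p, |t - h| ≤ δ * ‖p‖ := by
  obtain ⟨U, hU, V, hV, hUV⟩ := hdiff δ hδ
  obtain ⟨x, x', hsub, hnorm⟩ := exists_sub_eq_and_norm_sub_norm_eq p ht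
  have hsmall : ∀ z : E, Tendsto (fun c : ℝ => c • z) (𝓝[>] 0) (𝓝 0) := fun z => by
    simpa using ((tendsto_id (x := 𝓝 (0 : ℝ))).mono_left nhdsWithin_le_nhds).smul_const z
  have hnormV : ∀ᶠ c in 𝓝[>] (0 : ℝ), ‖c • x‖ ∈ V :=
    (hsmall x).norm.eventually_mem (by simpa using hV)
  obtain ⟨c, hc : 0 < c, hxU, hx'U, hxV⟩ := (eventually_mem_nhdsWithin.and
    (((hsmall x).eventually_mem hU).and (((hsmall x').eventually_mem hU).and hnormV))).exists
  obtain ⟨y', rfl, z, hz, hle⟩ := hUV _ hxU _ hx'U _ ⟨rfl, hxV⟩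
  rw [← smul_sub, hsub] at hz hle
  rw [hhom c hc] at hz
  obtain ⟨h, hh, rfl⟩ := mem_smul_set.mp hz
  refine ⟨h, hh, le_of_mul_le_mul_left ?_ hc⟩
  calc c * |t - h| = ‖‖c • x‖ - ‖c • x'‖ - c • h‖ := by
        rw [norm_smul, norm_smul, Real.norm_of_nonneg hc.le, smul_eq_mul, ← mul_sub, ← mul_sub,
          hnorm, Real.norm_eq_abs, abs_mul, abs_of_pos hc]
    _ ≤ δ * ‖c • p‖ := hle
    _ = c * (δ * ‖p‖) := by rw [norm_smul, Real.norm_of_nonneg hc.le]; ring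

lemma Icc_subset_of_pseudoStrictDiff_norm {H : E → Set ℝ} (hclosed : ∀ p, IsClosed (H p))
    (hhom : ∀ c : ℝ, 0 < c → ∀ w, H (c • w) = c • H w)
    (hdiff : PseudoStrictDiff (fun x : E => {‖x‖}) H 0 0) (p : E) :
    Icc (-‖p‖) ‖p‖ ⊆ H p := fun _ ht =>
  mem_of_forall_exists_abs_sub_le (hclosed p) fun _ hδ =>
    exists_abs_sub_le_of_pseudoStrictDiff_norm hhom hdiff hδ p (abs_le.mpr ht)

theorem pseudoStrictDiff_norm_iff {H : E → Set ℝ} (hclosed : ∀ p, IsClosed (H p))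
    (hhom : ∀ c : ℝ, 0 < c → ∀ w, H (c • w) = c • H w) :
    PseudoStrictDiff (fun x : E => {‖x‖}) H 0 0 ↔ ∀ p, Icc (-‖p‖) ‖p‖ ⊆ H p :=
  ⟨Icc_subset_of_pseudoStrictDiff_norm hclosed hhom, pseudoStrictDiff_norm_of_Icc_subset⟩

theorem stmt16 (H : EuclideanSpace ℝ (Fin 2) → Set ℝ) (hH : Prefan H) :
    PseudoStrictDiff (fun x : EuclideanSpace ℝ (Fin 2) => {‖x‖}) H 0 0 ↔
    ∀ p : EuclideanSpace ℝ (Fin 2), Icc (-‖p‖) ‖p‖ ⊆ H p :=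
  pseudoStrictDiff_norm_iff (fun p => (hH.1 p).2.2.isClosed) hH.2.1.2
end

section
/- Let $S:\mathbb{R}^n\rightrightarrows\mathbb{R}^m$ be locally closed at $(\bar x,\bar y)\in\mathrm{gph}(S)$ and $H:\mathbb{R}^n\rightrightarrows\mathbb{R}^m$ a prefan. If $S$ is pseudo strictly $H$-differentiable at $(\bar x,\bar y)$, then for all $p\in\mathbb{R}^n\setminus\{0\}$ and all $(u,v)$ in the limiting (Mordukhovich) normal cone $N_{\mathrm{gph}(S)}(\bar x,\bar y)$, there exists $y\in H(p)$ with $\langle v,y\rangle\ge -\langle u,p\rangle$. -/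
open Metric Set Filter Topology Pointwise
open scoped RealInnerProductSpace

variable {n m : ℕ}

/-- `(u, v)` is a regular normal to `C ⊆ ℝⁿ × ℝᵐ` at `z ∈ C`. -/
def RegNormal (C : Set (EuclideanSpace ℝ (Fin n) × EuclideanSpace ℝ (Fin m)))
    (z : EuclideanSpace ℝ (Fin n) × EuclideanSpace ℝ (Fin m))
    (u : EuclideanSpace ℝ (Fin n)) (v : EuclideanSpace ℝ (Fin m)) : Prop :=
  ∀ ε : ℝ, 0 < ε → ∃ δ : ℝ, 0 < δ ∧ ∀ z' ∈ C, ‖z' - z‖ < δ →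
    ⟪u, z'.1 - z.1⟫ + ⟪v, z'.2 - z.2⟫ ≤ ε * ‖z' - z‖

/-- `(u, v)` is a limiting (Mordukhovich) normal to `C` at `z`. -/
def LimNormal (C : Set (EuclideanSpace ℝ (Fin n) × EuclideanSpace ℝ (Fin m)))
    (z : EuclideanSpace ℝ (Fin n) × EuclideanSpace ℝ (Fin m))
    (u : EuclideanSpace ℝ (Fin n)) (v : EuclideanSpace ℝ (Fin m)) : Prop :=
  ∃ (zk : ℕ → EuclideanSpace ℝ (Fin n) × EuclideanSpace ℝ (Fin m))
    (uk : ℕ → EuclideanSpace ℝ (Fin n)) (vk : ℕ → EuclideanSpace ℝ (Fin m)),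
    (∀ k, zk k ∈ C) ∧ (∀ k, RegNormal C (zk k) (uk k) (vk k)) ∧
    Tendsto zk atTop (nhds z) ∧ Tendsto uk atTop (nhds u) ∧ Tendsto vk atTop (nhds v)

/-!
Fix `p` and `δ > 0`. At a graph point `(x, y)` near `(x̄, ȳ)`, pseudo strict differentiability
with `x' = x - t p` yields a graph point `(x - t p, y')` whose difference quotient
`t⁻¹ (y - y')` lies within `δ ‖p‖` of some `h ∈ H p`. Testing a regular normal `(u, v)` at
`(x, y)` against it and letting `t → 0⁺` gives `⟪v, h⟫ + ⟪u, p⟫ ≥ -δ ‖v‖ ‖p‖` for some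
`h ∈ H p`. Since `H p` is compact, the set of `(δ, u, v)` admitting such an `h` is closed, so the
inequality passes to limiting normals and then to `δ = 0`.
-/

theorem IsCompact.isClosed_setOf_exists_le {α β γ : Type*} [TopologicalSpace α]
    [TopologicalSpace β] [TopologicalSpace γ] [Preorder γ] [OrderClosedTopology γ]
    {K : Set β} (hK : IsCompact K) {f g : α × β → γ} (hf : Continuous f) (hg : Continuous g) :
    IsClosed {a | ∃ b ∈ K, f (a, b) ≤ g (a, b)} := by
  have : CompactSpace K := isCompact_iff_compactSpace.mp hK
  have hcont : Continuous fun q : α × K => (q.1, (q.2 : β)) := by fun_prop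
  convert isClosedMap_fst_of_compactSpace _ (isClosed_le (hf.comp hcont) (hg.comp hcont))
  ext a
  simp

theorem IsCompact.exists_le_of_forall_sub_le {β : Type*} [TopologicalSpace β] {K : Set β}
    (hK : IsCompact K) {f : β → ℝ} (hf : ContinuousOn f K) {c : ℝ}
    (h : ∀ ε > 0, ∃ b ∈ K, c - ε ≤ f b) : ∃ b ∈ K, c ≤ f b := by
  obtain ⟨b₁, hb₁, -⟩ := h 1 one_pos
  obtain ⟨b, hb, hmax⟩ := hK.exists_isMaxOn ⟨b₁, hb₁⟩ hf
  refine ⟨b, hb, le_of_forall_sub_le fun ε hε => ?_⟩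
  obtain ⟨b', hb', hle⟩ := h ε hε
  exact hle.trans (hmax hb')

theorem RegNormal.eventually_inner_add_inner_le
    {C : Set (EuclideanSpace ℝ (Fin n) × EuclideanSpace ℝ (Fin m))}
    {z : EuclideanSpace ℝ (Fin n) × EuclideanSpace ℝ (Fin m)}
    {u : EuclideanSpace ℝ (Fin n)} {v : EuclideanSpace ℝ (Fin m)}
    (hN : RegNormal C z u v) (R : ℝ) {ε : ℝ} (hε : 0 < ε) :
    ∀ᶠ t in 𝓝[>] (0 : ℝ), ∀ w, ‖w‖ ≤ R → z + t • w ∈ C → ⟪u, w.1⟫ + ⟪v, w.2⟫ ≤ ε := by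
  obtain ⟨η, hη, hN⟩ := hN (ε / (|R| + 1)) (by positivity)
  have hsmall : ∀ᶠ t in 𝓝[>] (0 : ℝ), t * (|R| + 1) < η := nhdsWithin_le_nhds <|
    ((continuous_mul_const _).tendsto' 0 0 (zero_mul _)).eventually_lt_const hη
  filter_upwards [hsmall, self_mem_nhdsWithin] with t htη (ht : 0 < t) w hw hmem
  have hw' : ‖w‖ < |R| + 1 := by linarith [le_abs_self R]
  have hdist : ‖z + t • w - z‖ = t * ‖w‖ := by
    rw [add_sub_cancel_left, norm_smul, Real.norm_of_nonneg ht.le]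
  have hle := hN _ hmem (by rw [hdist]; nlinarith)
  rw [hdist] at hle
  simp only [Prod.fst_add, Prod.snd_add, Prod.smul_fst, Prod.smul_snd, add_sub_cancel_left,
    real_inner_smul_right] at hle
  have hbound : ε / (|R| + 1) * (t * ‖w‖) ≤ t * ε := by
    rw [div_mul_eq_mul_div, div_le_iff₀ (by positivity)]
    nlinarith [mul_le_mul_of_nonneg_left hw'.le (mul_pos hε ht).le]
  nlinarith

theorem IsCompact.exists_inner_add_inner_ge_of_tendsto {ι E F : Type*} [NormedAddCommGroup E]
    [InnerProductSpace ℝ E] [NormedAddCommGroup F] [InnerProductSpace ℝ F] {K : Set F}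
    (hK : IsCompact K) (p : E) {l : Filter ι} [l.NeBot] {δ : ι → ℝ} {u : ι → E} {v : ι → F}
    {δ₀ : ℝ} {u₀ : E} {v₀ : F} (hδ : Tendsto δ l (𝓝 δ₀)) (hu : Tendsto u l (𝓝 u₀))
    (hv : Tendsto v l (𝓝 v₀))
    (h : ∀ᶠ i in l, ∃ h ∈ K, -(δ i * ‖v i‖ * ‖p‖) ≤ ⟪v i, h⟫ + ⟪u i, p⟫) :
    ∃ h ∈ K, -(δ₀ * ‖v₀‖ * ‖p‖) ≤ ⟪v₀, h⟫ + ⟪u₀, p⟫ :=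
  (hK.isClosed_setOf_exists_le (f := fun q : (ℝ × E × F) × F => -(q.1.1 * ‖q.1.2.2‖ * ‖p‖))
    (g := fun q => ⟪q.1.2.2, q.2⟫ + ⟪q.1.2.1, p⟫) (by fun_prop) (by fun_prop)).mem_of_tendsto
    (hδ.prodMk_nhds (hu.prodMk_nhds hv)) h

theorem PosHomog.inv_smul_mem_enl {X Y : Type*} [NormedAddCommGroup X] [NormedSpace ℝ X]
    [NormedAddCommGroup Y] [NormedSpace ℝ Y] {H : X → Set Y} (hH : PosHomog H) {δ t : ℝ}
    (ht : 0 < t) {p : X} {y : Y} (hy : y ∈ enl H δ (t • p)) : t⁻¹ • y ∈ enl H δ p := by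
  obtain ⟨_, hh', hle⟩ := hy
  rw [hH.2 t ht p] at hh'
  obtain ⟨h, hh, rfl⟩ := hh'
  refine ⟨h, hh, ?_⟩
  rw [norm_smul, Real.norm_of_nonneg ht.le] at hle
  rw [← inv_smul_smul₀ ht.ne' h, ← smul_sub, norm_smul, Real.norm_of_nonneg (inv_pos.mpr ht).le,
    inv_mul_le_iff₀ ht]
  linarith

theorem PseudoStrictDiff.eventually_exists_inner_add_inner_ge
    {S H : EuclideanSpace ℝ (Fin n) → Set (EuclideanSpace ℝ (Fin m))}
    {xb : EuclideanSpace ℝ (Fin n)} {yb : EuclideanSpace ℝ (Fin m)}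
    (hdiff : PseudoStrictDiff S H xb yb) (hH : PosHomog H) {p : EuclideanSpace ℝ (Fin n)}
    (hHp : IsCompact (H p)) {δ : ℝ} (hδ : 0 < δ) :
    ∀ᶠ z in 𝓝 (xb, yb), z ∈ gph S → ∀ u v, RegNormal (gph S) z u v →
      ∃ h ∈ H p, -(δ * ‖v‖ * ‖p‖) ≤ ⟪v, h⟫ + ⟪u, p⟫ := by
  obtain ⟨U, hU, V, hV, hSV⟩ := hdiff δ hδ
  obtain ⟨r, hr, hrU⟩ := Metric.mem_nhds_iff.mp hU
  obtain ⟨B, hB⟩ := isBounded_iff_forall_norm_le.mp hHp.isBounded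
  filter_upwards [prod_mem_nhds (ball_mem_nhds xb (half_pos hr)) hV]
  rintro ⟨x, y⟩ ⟨hx, hy⟩ hxy u v hN
  refine hHp.exists_le_of_forall_sub_le (by fun_prop) fun ε hε => ?_
  have hsmall : ∀ᶠ t in 𝓝[>] (0 : ℝ), t * ‖p‖ < r / 2 := nhdsWithin_le_nhds <|
    ((continuous_mul_const _).tendsto' 0 0 (zero_mul _)).eventually_lt_const (half_pos hr)
  obtain ⟨t, ht, htp, hpair⟩ := (eventually_mem_nhdsWithin.and
    (hsmall.and (hN.eventually_inner_add_inner_le (‖p‖ + (B + δ * ‖p‖)) hε))).exists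
  have ht : 0 < t := ht
  have hx' : x - t • p ∈ U := by
    refine hrU (lt_of_le_of_lt (dist_triangle _ x _) ?_)
    rw [dist_self_sub_left, norm_smul, Real.norm_of_nonneg ht.le]
    linarith [mem_ball.mp hx]
  obtain ⟨y', hy', hyy'⟩ :=
    hSV x (hrU (ball_subset_ball (half_le_self hr.le) hx)) _ hx' y ⟨hxy, hy⟩
  rw [sub_sub_cancel] at hyy'
  obtain ⟨h, hh, hq⟩ := hH.inv_smul_mem_enl ht hyy'
  set q := t⁻¹ • (y - y')
  refine ⟨h, hh, ?_⟩
  have hw : ‖((-p, -q) : EuclideanSpace ℝ (Fin n) × EuclideanSpace ℝ (Fin m))‖ ≤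
      ‖p‖ + (B + δ * ‖p‖) := by
    rw [Prod.norm_def, norm_neg, norm_neg, max_le_iff]
    constructor
    · linarith [hB h hh, norm_nonneg h, mul_nonneg hδ.le (norm_nonneg p)]
    · linarith [norm_le_norm_add_norm_sub' q h, hB h hh, norm_nonneg p]
  have hmem : (x, y) + t • ((-p, -q) :
      EuclideanSpace ℝ (Fin n) × EuclideanSpace ℝ (Fin m)) ∈ gph S := by
    rw [Prod.smul_mk, Prod.mk_add_mk, smul_neg, smul_neg, smul_inv_smul₀ ht.ne',
      ← sub_eq_add_neg, ← sub_eq_add_neg, sub_sub_cancel]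
    exact hy'
  have hvq : ⟪v, q⟫ ≤ ⟪v, h⟫ + δ * ‖v‖ * ‖p‖ := calc
    ⟪v, q⟫ = ⟪v, h⟫ + ⟪v, q - h⟫ := by rw [inner_sub_right]; ring
    _ ≤ ⟪v, h⟫ + ‖v‖ * ‖q - h‖ := by gcongr; exact real_inner_le_norm _ _
    _ ≤ ⟪v, h⟫ + δ * ‖v‖ * ‖p‖ := by nlinarith [norm_nonneg v]
  have := hpair _ hw hmem
  simp only [inner_neg_right] at this
  linarith

theorem stmt19_general
    (S : EuclideanSpace ℝ (Fin n) → Set (EuclideanSpace ℝ (Fin m)))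
    (H : EuclideanSpace ℝ (Fin n) → Set (EuclideanSpace ℝ (Fin m)))
    (xb : EuclideanSpace ℝ (Fin n)) (yb : EuclideanSpace ℝ (Fin m))
    (hH : Prefan H)
    (hdiff : PseudoStrictDiff S H xb yb) :
    ∀ p : EuclideanSpace ℝ (Fin n), p ≠ 0 →
      ∀ u v, LimNormal (gph S) (xb, yb) u v →
        ∃ y ∈ H p, ⟪v, y⟫ ≥ -⟪u, p⟫ := by
  intro p _ u v ⟨zk, uk, vk, hzk, hN, hz, hu, hv⟩
  have hHp : IsCompact (H p) := (hH.1 p).2.2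
  have hδ : ∀ δ > 0, ∃ h ∈ H p, -(δ * ‖v‖ * ‖p‖) ≤ ⟪v, h⟫ + ⟪u, p⟫ := fun δ hδ =>
    hHp.exists_inner_add_inner_ge_of_tendsto p tendsto_const_nhds hu hv <|
      (hz.eventually (hdiff.eventually_exists_inner_add_inner_ge hH.2.1 hHp hδ)).mono
        fun k hk => hk (hzk k) _ _ (hN k)
  obtain ⟨y, hy, hle⟩ := hHp.exists_inner_add_inner_ge_of_tendsto p (l := 𝓝[>] 0)
    (tendsto_nhdsWithin_of_tendsto_nhds tendsto_id) tendsto_const_nhds tendsto_const_nhds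
    (eventually_mem_nhdsWithin.mono hδ)
  exact ⟨y, hy, by linarith⟩

theorem stmt19
    (S : EuclideanSpace ℝ (Fin n) → Set (EuclideanSpace ℝ (Fin m)))
    (H : EuclideanSpace ℝ (Fin n) → Set (EuclideanSpace ℝ (Fin m)))
    (xb : EuclideanSpace ℝ (Fin n)) (yb : EuclideanSpace ℝ (Fin m))
    (hgph : yb ∈ S xb) (hloc : LocallyClosedAt S xb yb) (hH : Prefan H)
    (hdiff : PseudoStrictDiff S H xb yb) :
    ∀ p : EuclideanSpace ℝ (Fin n), p ≠ 0 →
      ∀ u v, LimNormal (gph S) (xb, yb) u v →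
        ∃ y ∈ H p, ⟪v, y⟫ ≥ -⟪u, p⟫ :=
  stmt19_general S H xb yb hH hdiff
end
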